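/- arXiv:1907.08829 — 3 statements merged into one kernel-verified Lean document; each statement's English description precedes it below -/
import Mathlib

section
/- Suppose in addition that B̂ is irreducible. Then every equilibrium (p^{S*}, p^{I*}) ∈ Δ_N of the network SIRI dynamics with p^{I*} ≠ 0 satisfies p^{I*}_j > 0 for all j and p^{S*} = 0. -/
open Matrix Filter Topology

/-- Spectral radius of a real matrix: sup of absolute values of its complex eigenvalues. -/
noncomputable def specRad (N : ℕ) (A : Matrix (Fin N) (Fin N) ℝ) : ℝ :=
  sSup {r : ℝ | ∃ μ ∈ spectrum ℂ (A.map (Complex.ofReal : ℝ → ℂ)), r = ‖μ‖}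

/-- Spectral abscissa of a real matrix: sup of real parts of its complex eigenvalues. -/
noncomputable def specAbsc (N : ℕ) (A : Matrix (Fin N) (Fin N) ℝ) : ℝ :=
  sSup {r : ℝ | ∃ μ ∈ spectrum ℂ (A.map (Complex.ofReal : ℝ → ℂ)), r = μ.re}

/-- Irreducibility of a nonnegative matrix. -/
def MatIrreducible (N : ℕ) (A : Matrix (Fin N) (Fin N) ℝ) : Prop :=
  ∀ i j : Fin N, ∃ m : ℕ, 0 < m ∧ 0 < (A ^ m) i j

/-- The cube [0,1]^N. -/
def cube (N : ℕ) : Set (Fin N → ℝ) := {p | ∀ j, 0 ≤ p j ∧ p j ≤ 1}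

/-- B*(p) = (I − diag p) B̂ + diag p · B. -/
noncomputable def Bstar (N : ℕ) (B Bh : Matrix (Fin N) (Fin N) ℝ) (p : Fin N → ℝ) :
    Matrix (Fin N) (Fin N) ℝ :=
  (1 - Matrix.diagonal p) * Bh + Matrix.diagonal p * B

/-- The network SIRI vector field on (p^S, p^I). -/
noncomputable def siriField (N : ℕ) (B Bh D : Matrix (Fin N) (Fin N) ℝ)
    (y : (Fin N → ℝ) × (Fin N → ℝ)) : (Fin N → ℝ) × (Fin N → ℝ) :=
  (fun j => -(y.1 j * (B *ᵥ y.2) j),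
   fun j => ((Bstar N B Bh y.1 - D) *ᵥ y.2) j - y.2 j * (Bh *ᵥ y.2) j)

/-- Membership in the state space Δ_N. -/
def inSimplex (N : ℕ) (y : (Fin N → ℝ) × (Fin N → ℝ)) : Prop :=
  ∀ j, 0 ≤ y.1 j ∧ 0 ≤ y.2 j ∧ y.1 j + y.2 j ≤ 1

/-- y is a solution of the SIRI dynamics for t ≥ 0. -/
def IsSol (N : ℕ) (B Bh D : Matrix (Fin N) (Fin N) ℝ)
    (y : ℝ → (Fin N → ℝ) × (Fin N → ℝ)) : Prop :=
  ∀ t : ℝ, 0 ≤ t → HasDerivAt y (siriField N B Bh D (y t)) t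

/-- Reproduction number R(p) = ρ(B*(p) D⁻¹). -/
noncomputable def Rnum (N : ℕ) (B Bh D : Matrix (Fin N) (Fin N) ℝ) (p : Fin N → ℝ) : ℝ :=
  specRad N (Bstar N B Bh p * D⁻¹)

/-- Maximum basic reproduction number. -/
noncomputable def Rmax (N : ℕ) (B Bh D : Matrix (Fin N) (Fin N) ℝ) : ℝ :=
  sSup (Rnum N B Bh D '' cube N)

/-- Minimum basic reproduction number. -/
noncomputable def Rmin (N : ℕ) (B Bh D : Matrix (Fin N) (Fin N) ℝ) : ℝ :=
  sInf (Rnum N B Bh D '' cube N)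

/-!
At an equilibrium, `(B*(pS) pI)_k = pI_k (δ_k + (B̂ pI)_k)`, and `B*(pS)` is a nonnegative
matrix that is positive wherever `B̂` is. So a zero `k` of `pI` propagates to every `m` with
`B̂_km > 0`, and irreducibility of `B̂` spreads it to all indices, contradicting `pI ≠ 0`.
With `pI ≫ 0`, every row of `B` has a positive entry (those of `B̂` do), so `(B pI)_j > 0`
and the first equation `pS_j (B pI)_j = 0` forces `pS = 0`.
-/

namespace Matrix

variable {n : Type*} {A : Matrix n n ℝ}

lemma IsIrreducible.forall_of_pos_closed (hA : A.IsIrreducible) {P : n → Prop}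
    (hP : ∀ k m, P k → 0 < A k m → P m) {i : n} (hi : P i) (j : n) : P j := by
  let := toQuiver A
  obtain ⟨q, -⟩ := hA.connected i j
  induction q with
  | nil => exact hi
  | cons _ e ih => exact hP _ _ ih e.down

lemma mulVec_apply_pos [Fintype n] {v : n → ℝ} (hA : ∀ i j, 0 ≤ A i j) (hv : 0 ≤ v)
    {i j : n} (hij : 0 < A i j) (hj : 0 < v j) : 0 < (A *ᵥ v) i :=
  Finset.sum_pos' (fun k _ => mul_nonneg (hA i k) (hv k)) ⟨j, Finset.mem_univ j, mul_pos hij hj⟩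

end Matrix

section SIRI

variable {N : ℕ} {B Bh : Matrix (Fin N) (Fin N) ℝ}

lemma bstar_apply (p : Fin N → ℝ) (j k : Fin N) :
    Bstar N B Bh p j k = (1 - p j) * Bh j k + p j * B j k := by
  simp [Bstar, sub_mul, Matrix.diagonal_mul]

lemma bstar_nonneg (hB : ∀ j k, 0 ≤ B j k) (hBh : ∀ j k, 0 ≤ Bh j k) {p : Fin N → ℝ}
    (hp : p ∈ cube N) (j k : Fin N) : 0 ≤ Bstar N B Bh p j k := by
  rw [bstar_apply]
  exact add_nonneg (mul_nonneg (sub_nonneg.2 (hp j).2) (hBh j k)) (mul_nonneg (hp j).1 (hB j k))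

lemma bstar_apply_pos {p : Fin N → ℝ} (hp : p ∈ cube N) {j k : Fin N} (hB : 0 < B j k)
    (hBh : 0 < Bh j k) : 0 < Bstar N B Bh p j k := by
  rw [bstar_apply]
  rcases (hp j).2.lt_or_eq with h | h
  · exact add_pos_of_pos_of_nonneg (mul_pos (sub_pos.2 h) hBh) (mul_nonneg (hp j).1 hB.le)
  · simpa [h] using hB

variable {δ pS pI : Fin N → ℝ}

lemma mul_mulVec_apply_eq_zero_of_siriField_eq_zero {D : Matrix (Fin N) (Fin N) ℝ}
    (h : siriField N B Bh D (pS, pI) = 0) (j : Fin N) : pS j * (B *ᵥ pI) j = 0 := by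
  simpa [siriField] using congrFun (congrArg Prod.fst h) j

lemma bstar_mulVec_apply_of_siriField_eq_zero
    (h : siriField N B Bh (diagonal δ) (pS, pI) = 0) (j : Fin N) :
    (Bstar N B Bh pS *ᵥ pI) j = pI j * (δ j + (Bh *ᵥ pI) j) := by
  have hj := congrFun (congrArg Prod.snd h) j
  simp only [siriField, sub_mulVec, mulVec_diagonal, Pi.sub_apply, Prod.snd_zero,
    Pi.zero_apply] at hj
  linarith

end SIRI

theorem stmt1_general {N : ℕ} (hN : 2 ≤ N) (B Bh : Matrix (Fin N) (Fin N) ℝ) (δ : Fin N → ℝ)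
    (hB : ∀ j k, 0 ≤ B j k)
    (hBh : ∀ j k, 0 ≤ Bh j k) (hz : ∀ j k, B j k = 0 → Bh j k = 0)
    (hBhirr : MatIrreducible N Bh)
    (pS pI : Fin N → ℝ) (hmem : inSimplex N (pS, pI))
    (heq : siriField N B Bh (Matrix.diagonal δ) (pS, pI) = 0)
    (hne : pI ≠ 0) :
    (∀ j, 0 < pI j) ∧ pS = 0 := by
  have hirr : Bh.IsIrreducible := (isIrreducible_iff_exists_pow_pos hBh).2 hBhirr
  have hpI : 0 ≤ pI := fun j => (hmem j).2.1
  have hpS : pS ∈ cube N := fun j => ⟨(hmem j).1, by linarith [(hmem j).2.1, (hmem j).2.2]⟩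
  have hBpos : ∀ j k, 0 < Bh j k → 0 < B j k := fun j k h =>
    (hB j k).lt_of_ne fun h0 => h.ne' (hz j k h0.symm)
  have hpos : ∀ j, 0 < pI j := by
    by_contra! ⟨i, hi⟩
    refine hne (funext (hirr.forall_of_pos_closed (P := fun k => pI k = 0) ?_
      (le_antisymm hi (hpI i))))
    intro k m hk hkm
    by_contra hm
    have hlt := mulVec_apply_pos (bstar_nonneg hB hBh hpS) hpI
      (bstar_apply_pos hpS (hBpos k m hkm) hkm) ((hpI m).lt_of_ne' hm)
    rw [bstar_mulVec_apply_of_siriField_eq_zero heq, hk, zero_mul] at hlt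
    exact hlt.false
  refine ⟨hpos, funext fun j => ?_⟩
  have := Fin.nontrivial_iff_two_le.mpr hN
  obtain ⟨l, hl⟩ := hirr.exists_pos j
  exact (mul_eq_zero.mp (mul_mulVec_apply_eq_zero_of_siriField_eq_zero heq j)).resolve_right
    (mulVec_apply_pos hB hpI (hBpos j l hl) (hpos l)).ne'

/-- with B̂ irreducible, every non-infection-free equilibrium has
p^I ≫ 0 and p^S = 0. -/
theorem stmt1 {N : ℕ} (hN : 2 ≤ N) (B Bh : Matrix (Fin N) (Fin N) ℝ) (δ : Fin N → ℝ)
    (hB : ∀ j k, 0 ≤ B j k) (hBirr : MatIrreducible N B)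
    (hBh : ∀ j k, 0 ≤ Bh j k) (hz : ∀ j k, B j k = 0 → Bh j k = 0)
    (hBhirr : MatIrreducible N Bh)
    (hδ : ∀ j, 0 < δ j)
    (pS pI : Fin N → ℝ) (hmem : inSimplex N (pS, pI))
    (heq : siriField N B Bh (Matrix.diagonal δ) (pS, pI) = 0)
    (hne : pI ≠ 0) :
    (∀ j, 0 < pI j) ∧ pS = 0 :=
  stmt1_general hN B Bh δ hB hBh hz hBhirr pS pI hmem heq hne
end

section
/- Assume B̂ is irreducible. Then there exists a vector p^{I*} with p^{I*}_j > 0 for all j satisfying p^{I*}_j = (Σ_k β̂_{jk} p^{I*}_k)/(δ_j + Σ_k β̂_{jk} p^{I*}_k) for all j if and only if R_1 = ρ(B̂ D^{−1}) > 1. Moreover, when R_1 > 1 this vector is unique and satisfies 0 < p^{I*}_j < 1 for all j. -/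
open Matrix Filter Topology

open scoped ENNReal NNReal

/-!
Write `F p = Bh p / (δ + Bh p)` (componentwise) for the equilibrium map and `M = Bh D⁻¹`.
A positive fixed point `p` of `F` satisfies `D p < M (D p)`, and such a strictly superinvariant
positive vector forces `ρ(M) > 1`: its iterates make `‖M ^ n‖` grow like `r ^ n` with `r > 1`,
and Gelfand's formula turns this into a lower bound on the spectral radius.
Conversely, if `ρ(M) > 1`, the moduli of an eigenvector for an eigenvalue of modulus `r > 1`
give `w ≥ 0` with `r w ≤ M w`; a small multiple `p₀` of `D⁻¹ w` is a subsolution `p₀ ≤ F p₀`,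
and since `F` is monotone on `[0,1]^N`, Knaster–Tarski yields a fixed point above `p₀`, which is
positive by irreducibility. Uniqueness comes from strict subhomogeneity, `θ F p < F (θ p)` for
`0 < θ < 1`: comparing two positive fixed points at the index minimising their ratio.
-/

section NonnegMatrix

variable {ι κ : Type*} [Fintype κ]

theorem Matrix.mulVec_mono_of_nonneg {A : Matrix ι κ ℝ} (hA : ∀ i j, 0 ≤ A i j) {v w : κ → ℝ}
    (hvw : v ≤ w) : A *ᵥ v ≤ A *ᵥ w :=
  fun i => Finset.sum_le_sum fun k _ => mul_le_mul_of_nonneg_left (hvw k) (hA i k)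

theorem Matrix.mulVec_nonneg_of_nonneg {A : Matrix ι κ ℝ} (hA : ∀ i j, 0 ≤ A i j) {v : κ → ℝ}
    (hv : 0 ≤ v) : 0 ≤ A *ᵥ v := by
  simpa using A.mulVec_mono_of_nonneg hA hv

variable [DecidableEq κ] {A : Matrix κ κ ℝ}

theorem Matrix.pow_smul_le_pow_mulVec (hA : ∀ i j, 0 ≤ A i j) {r : ℝ} (hr : 0 ≤ r) {v : κ → ℝ}
    (h : r • v ≤ A *ᵥ v) (n : ℕ) : r ^ n • v ≤ (A ^ n) *ᵥ v := by
  induction n with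
  | zero => simp
  | succ n ih =>
    calc r ^ (n + 1) • v = r ^ n • (r • v) := by rw [pow_succ, mul_smul]
      _ ≤ r ^ n • (A *ᵥ v) := smul_le_smul_of_nonneg_left h (pow_nonneg hr n)
      _ = A *ᵥ (r ^ n • v) := (Matrix.mulVec_smul A _ v).symm
      _ ≤ A *ᵥ ((A ^ n) *ᵥ v) := A.mulVec_mono_of_nonneg hA ih
      _ = (A ^ (n + 1)) *ᵥ v := by rw [Matrix.mulVec_mulVec, pow_succ']

end NonnegMatrix

theorem exists_fixedPoint_ge_of_mapsTo_Icc {α : Type*} [ConditionallyCompleteLattice α]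
    {a b : α} {F : α → α} (hmaps : Set.MapsTo F (Set.Icc a b) (Set.Icc a b))
    (hmono : MonotoneOn F (Set.Icc a b)) {x : α} (hx : x ∈ Set.Icc a b) (hxF : x ≤ F x) :
    ∃ p ∈ Set.Icc x b, F p = p := by
  have : Fact (a ≤ b) := ⟨hx.1.trans hx.2⟩
  let G : Set.Icc a b →o Set.Icc a b :=
    ⟨fun p => ⟨F p, hmaps p.2⟩, fun p q hpq => hmono p.2 q.2 hpq⟩
  have hle : (⟨x, hx⟩ : Set.Icc a b) ≤ G.gfp := G.le_gfp hxF
  exact ⟨G.gfp, ⟨hle, G.gfp.2.2⟩, congrArg Subtype.val G.map_gfp⟩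

theorem MatIrreducible.eq_zero_or_pos {N : ℕ} {A : Matrix (Fin N) (Fin N) ℝ}
    (hirr : MatIrreducible N A) (hA : ∀ i j, 0 ≤ A i j) {p : Fin N → ℝ} (hp : 0 ≤ p)
    (hsupp : ∀ j, p j = 0 → (A *ᵥ p) j = 0) : p = 0 ∨ ∀ j, 0 < p j := by
  by_contra! ⟨hp0, j, hj⟩
  replace hj : p j = 0 := le_antisymm hj (hp j)
  obtain ⟨k, hk⟩ := Function.ne_iff.mp hp0
  replace hk : 0 < p k := lt_of_le_of_ne (hp k) (Ne.symm hk)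
  -- Every `A`-edge out of a zero of `p` leads to a zero of `p`, so zeros persist under `A ^ m`.
  have hzero : ∀ m i, p i = 0 → ((A ^ m) *ᵥ p) i = 0 := by
    intro m
    induction m with
    | zero => simp
    | succ m ih =>
      intro i hi
      have hsum : ∑ l, A i l * p l = 0 := hsupp i hi
      have hterms : ∀ l, A i l * p l = 0 := fun l =>
        (Finset.sum_eq_zero_iff_of_nonneg fun l _ => mul_nonneg (hA i l) (hp l)).mp
          hsum l (Finset.mem_univ l)
      rw [pow_succ', ← Matrix.mulVec_mulVec]
      show ∑ l, A i l * ((A ^ m) *ᵥ p) l = 0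
      refine Finset.sum_eq_zero fun l _ => ?_
      rcases (hp l).eq_or_lt with hl | hl
      · simp [ih l hl.symm]
      · simp [(mul_eq_zero.mp (hterms l)).resolve_right hl.ne']
  obtain ⟨m, -, hm⟩ := hirr j k
  have hpos : 0 < ((A ^ m) *ᵥ p) j :=
    (mul_pos hm hk).trans_le <| Finset.single_le_sum (s := Finset.univ)
      (f := fun l => (A ^ m) j l * p l)
      (fun l _ => mul_nonneg (pow_apply_nonneg hA m j l) (hp l)) (Finset.mem_univ k)
  exact hpos.ne' (hzero m j hj)

theorem spectrum.ofReal_le_spectralRadius_of_mul_pow_le_norm_pow {A : Type*} [NormedRing A]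
    [NormedAlgebra ℂ A] [CompleteSpace A] {a : A} {c r : ℝ} (hc : 0 < c)
    (h : ∀ n : ℕ, c * r ^ n ≤ ‖a ^ n‖) : ENNReal.ofReal r ≤ spectralRadius ℂ a := by
  refine le_of_forall_lt_imp_le_of_dense fun x hx => ?_
  rw [← ENNReal.ofReal_toReal hx.ne_top]
  set μ := x.toReal
  have hμ0 : 0 ≤ μ := ENNReal.toReal_nonneg
  have hμr : μ < r := ENNReal.toReal_lt_of_lt_ofReal hx
  have hr0 : 0 < r := hμ0.trans_lt hμr
  have hratio : Tendsto (fun n : ℕ => (μ / r) ^ n) atTop (𝓝 0) :=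
    tendsto_pow_atTop_nhds_zero_of_lt_one (div_nonneg hμ0 hr0.le) ((div_lt_one hr0).mpr hμr)
  have hev : ∀ᶠ n : ℕ in atTop, ENNReal.ofReal μ ≤ (‖a ^ n‖₊ : ℝ≥0∞) ^ (1 / n : ℝ) := by
    filter_upwards [hratio.eventually (gt_mem_nhds hc), eventually_ge_atTop 1] with n hn hn1
    have hpow : μ ^ n ≤ ‖a ^ n‖ := calc
      μ ^ n = (μ / r) ^ n * r ^ n := by rw [div_pow, div_mul_cancel₀ _ (pow_pos hr0 n).ne']
      _ ≤ c * r ^ n := mul_le_mul_of_nonneg_right hn.le (pow_nonneg hr0.le n)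
      _ ≤ ‖a ^ n‖ := h n
    calc ENNReal.ofReal μ = ENNReal.ofReal (μ ^ n) ^ (1 / n : ℝ) := by
          rw [ENNReal.ofReal_pow hμ0, ← ENNReal.rpow_natCast, ← ENNReal.rpow_mul,
            mul_one_div_cancel (by positivity), ENNReal.rpow_one]
      _ ≤ (‖a ^ n‖₊ : ℝ≥0∞) ^ (1 / n : ℝ) := by
          gcongr
          rw [← ENNReal.ofReal_coe_nnreal, coe_nnnorm]
          exact ENNReal.ofReal_le_ofReal hpow
  exact ge_of_tendsto (spectrum.pow_nnnorm_pow_one_div_tendsto_nhds_spectralRadius a) hev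

section LinftyOpNorm

attribute [local instance] Matrix.linftyOpSeminormedAddCommGroup

theorem Matrix.sum_norm_apply_le_linfty_opNorm {m n α : Type*} [Fintype m] [Fintype n]
    [SeminormedAddCommGroup α] (B : Matrix m n α) (i : m) : ∑ j, ‖B i j‖ ≤ ‖B‖ := by
  rw [Matrix.linfty_opNorm_def]
  calc ∑ j, ‖B i j‖ = ((∑ j, ‖B i j‖₊ : ℝ≥0) : ℝ) := by push_cast; rfl
    _ ≤ _ := NNReal.coe_le_coe.mpr (Finset.le_sup (f := fun i => ∑ j, ‖B i j‖₊) (Finset.mem_univ i))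

end LinftyOpNorm

theorem Matrix.exists_norm_smul_le_mulVec_of_mem_spectrum {ι : Type*} [Fintype ι] [DecidableEq ι]
    {A : Matrix ι ι ℝ} (hA : ∀ i j, 0 ≤ A i j) {μ : ℂ}
    (hμ : μ ∈ spectrum ℂ (A.map ((↑) : ℝ → ℂ))) :
    ∃ w : ι → ℝ, 0 ≤ w ∧ w ≠ 0 ∧ ‖μ‖ • w ≤ A *ᵥ w := by
  rw [← Matrix.spectrum_toLin', ← Module.End.hasEigenvalue_iff_mem_spectrum] at hμ
  obtain ⟨z, hz⟩ := hμ.exists_hasEigenvector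
  have hAz : A.map ((↑) : ℝ → ℂ) *ᵥ z = μ • z := by
    simpa [Matrix.toLin'_apply] using hz.apply_eq_smul
  refine ⟨fun k => ‖z k‖, fun k => norm_nonneg _, fun h0 => hz.2 ?_, fun j => ?_⟩
  · ext k; simpa using congrFun h0 k
  calc ‖μ‖ * ‖z j‖ = ‖∑ k, (A j k : ℂ) * z k‖ := by
        rw [← norm_mul]; exact congrArg norm (congrFun hAz j).symm
    _ ≤ ∑ k, ‖(A j k : ℂ) * z k‖ := norm_sum_le _ _
    _ = ∑ k, A j k * ‖z k‖ := by
        simp only [norm_mul, Complex.norm_real, Real.norm_of_nonneg (hA j _)]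

section LinftyOpNormedAlgebra

attribute [local instance] Matrix.linftyOpNormedRing Matrix.linftyOpNormedAlgebra

theorem Matrix.ofReal_le_spectralRadius_of_smul_le_mulVec {ι : Type*} [Fintype ι]
    [DecidableEq ι] [Nonempty ι] {A : Matrix ι ι ℝ} (hA : ∀ i j, 0 ≤ A i j) {q : ι → ℝ}
    (hq : ∀ j, 0 < q j) {r : ℝ} (hr : 0 ≤ r) (h : r • q ≤ A *ᵥ q) :
    ENNReal.ofReal r ≤ spectralRadius ℂ (A.map ((↑) : ℝ → ℂ)) := by
  obtain ⟨j⟩ := ‹Nonempty ι›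
  set Q := ∑ k, q k
  have hQ : 0 < Q := Finset.sum_pos (fun k _ => hq k) Finset.univ_nonempty
  refine spectrum.ofReal_le_spectralRadius_of_mul_pow_le_norm_pow (div_pos (hq j) hQ) fun n => ?_
  have hpow : A.map ((↑) : ℝ → ℂ) ^ n = (A ^ n).map ((↑) : ℝ → ℂ) :=
    (map_pow (Complex.ofRealHom.mapMatrix : Matrix ι ι ℝ →+* Matrix ι ι ℂ) A n).symm
  calc q j / Q * r ^ n = (r ^ n • q) j / Q := by simp only [Pi.smul_apply, smul_eq_mul]; ring
    _ ≤ ((A ^ n) *ᵥ q) j / Q := by gcongr; exact pow_smul_le_pow_mulVec hA hr h n j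
    _ ≤ ∑ k, (A ^ n) j k := by
        rw [div_le_iff₀ hQ, Finset.sum_mul]
        exact Finset.sum_le_sum fun k _ => mul_le_mul_of_nonneg_left
          (Finset.single_le_sum (fun l _ => (hq l).le) (Finset.mem_univ k))
          (pow_apply_nonneg hA n j k)
    _ = ∑ k, ‖(A.map ((↑) : ℝ → ℂ) ^ n) j k‖ := by
        simp [hpow, Complex.norm_real, Real.norm_of_nonneg (pow_apply_nonneg hA n j _)]
    _ ≤ ‖A.map ((↑) : ℝ → ℂ) ^ n‖ := Matrix.sum_norm_apply_le_linfty_opNorm _ j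

theorem lt_specRad_iff_exists {N : ℕ} (A : Matrix (Fin N) (Fin N) ℝ) {x : ℝ} (hx : 0 ≤ x) :
    x < specRad N A ↔ ∃ μ ∈ spectrum ℂ (A.map ((↑) : ℝ → ℂ)), x < ‖μ‖ := by
  set Ac := A.map ((↑) : ℝ → ℂ)
  constructor
  · intro h
    have hne : {r : ℝ | ∃ μ ∈ spectrum ℂ Ac, r = ‖μ‖}.Nonempty := by
      by_contra hempty
      rw [Set.not_nonempty_iff_eq_empty] at hempty
      rw [specRad, hempty, Real.sSup_empty] at h
      exact hx.not_gt h
    obtain ⟨_, ⟨μ, hμ, rfl⟩, hxμ⟩ := exists_lt_of_lt_csSup hne h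
    exact ⟨μ, hμ, hxμ⟩
  · rintro ⟨μ, hμ, hxμ⟩
    refine hxμ.trans_le (le_csSup ⟨‖Ac‖ * ‖(1 : Matrix (Fin N) (Fin N) ℂ)‖, ?_⟩ ⟨μ, hμ, rfl⟩)
    rintro _ ⟨ν, hν, rfl⟩
    exact spectrum.norm_le_norm_mul_of_mem hν

end LinftyOpNormedAlgebra

theorem lt_specRad_iff_lt_spectralRadius {N : ℕ} (A : Matrix (Fin N) (Fin N) ℝ) {x : ℝ}
    (hx : 0 ≤ x) :
    x < specRad N A ↔ ENNReal.ofReal x < spectralRadius ℂ (A.map ((↑) : ℝ → ℂ)) := by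
  simp only [lt_specRad_iff_exists A hx, spectralRadius, lt_iSup_iff, ENNReal.ofReal_lt_coe_iff hx,
    coe_nnnorm, exists_prop]

theorem one_lt_specRad_of_lt_mulVec {N : ℕ} [Nonempty (Fin N)] {A : Matrix (Fin N) (Fin N) ℝ}
    (hA : ∀ i j, 0 ≤ A i j) {q : Fin N → ℝ} (hq : ∀ j, 0 < q j) (h : ∀ j, q j < (A *ᵥ q) j) :
    1 < specRad N A := by
  obtain ⟨j₀, -, hmin⟩ :=
    Finset.exists_min_image Finset.univ (fun j => (A *ᵥ q) j / q j) Finset.univ_nonempty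
  set r := (A *ᵥ q) j₀ / q j₀
  have hr : 1 < r := (one_lt_div (hq j₀)).mpr (h j₀)
  have hrq : r • q ≤ A *ᵥ q := fun j =>
    (le_div_iff₀ (hq j)).mp (hmin j (Finset.mem_univ j))
  rw [lt_specRad_iff_lt_spectralRadius A zero_le_one]
  exact ((ENNReal.ofReal_lt_ofReal_iff (by linarith)).mpr hr).trans_le
    (ofReal_le_spectralRadius_of_smul_le_mulVec hA hq (by linarith) hrq)

theorem Matrix.inv_diagonal_of_ne_zero {ι : Type*} [Fintype ι] [DecidableEq ι] {δ : ι → ℝ}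
    (hδ : ∀ j, δ j ≠ 0) : (diagonal δ)⁻¹ = diagonal δ⁻¹ := by
  refine inv_eq_right_inv ?_
  rw [diagonal_mul_diagonal, ← diagonal_one]
  exact congrArg diagonal (funext fun j => mul_inv_cancel₀ (hδ j))

theorem Matrix.mul_diagonal_mulVec {ι : Type*} [Fintype ι] [DecidableEq ι] (B : Matrix ι ι ℝ)
    (d w : ι → ℝ) : (B * diagonal d) *ᵥ w = B *ᵥ (d * w) := by
  rw [← mulVec_mulVec]
  congr 1
  ext k
  simp [mulVec_diagonal]

section EndemicMap

variable {ι : Type*} [Fintype ι] {Bh : Matrix ι ι ℝ} {δ : ι → ℝ}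

noncomputable def endemicMap (Bh : Matrix ι ι ℝ) (δ : ι → ℝ) (p : ι → ℝ) : ι → ℝ :=
  fun j => (Bh *ᵥ p) j / (δ j + (Bh *ᵥ p) j)

theorem endemicMap_nonneg (hBh : ∀ i j, 0 ≤ Bh i j) (hδ : ∀ j, 0 < δ j) {p : ι → ℝ}
    (hp : 0 ≤ p) : 0 ≤ endemicMap Bh δ p := fun j => by
  have hg : 0 ≤ (Bh *ᵥ p) j := Bh.mulVec_nonneg_of_nonneg hBh hp j
  exact div_nonneg hg (by linarith [hδ j])

theorem endemicMap_lt_one (hBh : ∀ i j, 0 ≤ Bh i j) (hδ : ∀ j, 0 < δ j) {p : ι → ℝ}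
    (hp : 0 ≤ p) (j : ι) : endemicMap Bh δ p j < 1 := by
  have hg : 0 ≤ (Bh *ᵥ p) j := Bh.mulVec_nonneg_of_nonneg hBh hp j
  exact (div_lt_one (by linarith [hδ j])).mpr (by linarith [hδ j])

theorem endemicMap_mono (hBh : ∀ i j, 0 ≤ Bh i j) (hδ : ∀ j, 0 < δ j) {p q : ι → ℝ}
    (hp : 0 ≤ p) (hpq : p ≤ q) : endemicMap Bh δ p ≤ endemicMap Bh δ q := fun j => by
  have hg : 0 ≤ (Bh *ᵥ p) j := Bh.mulVec_nonneg_of_nonneg hBh hp j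
  have hgg : (Bh *ᵥ p) j ≤ (Bh *ᵥ q) j := Bh.mulVec_mono_of_nonneg hBh hpq j
  have hd := hδ j
  rw [endemicMap, endemicMap, div_le_div_iff₀ (by linarith) (by linarith)]
  nlinarith

theorem endemicMap_eq_zero_iff (hBh : ∀ i j, 0 ≤ Bh i j) (hδ : ∀ j, 0 < δ j) {p : ι → ℝ}
    (hp : 0 ≤ p) (j : ι) : endemicMap Bh δ p j = 0 ↔ (Bh *ᵥ p) j = 0 := by
  have hg : 0 ≤ (Bh *ᵥ p) j := Bh.mulVec_nonneg_of_nonneg hBh hp j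
  rw [endemicMap, div_eq_zero_iff, or_iff_left (by linarith [hδ j])]

theorem mul_lt_mulVec_of_endemicMap_eq (hBh : ∀ i j, 0 ≤ Bh i j) (hδ : ∀ j, 0 < δ j)
    {p : ι → ℝ} (hp : ∀ j, 0 < p j) (hFp : endemicMap Bh δ p = p) (j : ι) :
    δ j * p j < (Bh *ᵥ p) j := by
  have hg : 0 < (Bh *ᵥ p) j := by
    refine (Bh.mulVec_nonneg_of_nonneg hBh (fun k => (hp k).le) j).lt_of_ne' fun hg => ?_
    have := (endemicMap_eq_zero_iff hBh hδ (fun k => (hp k).le) j).mpr hg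
    rw [hFp] at this
    exact (hp j).ne' this
  have hd := hδ j
  have hpj : p j = (Bh *ᵥ p) j / (δ j + (Bh *ᵥ p) j) := (congrFun hFp j).symm
  rw [hpj, mul_div_assoc', div_lt_iff₀ (by linarith)]
  nlinarith

theorem le_endemicMap_of_smul_le (hBh : ∀ i j, 0 ≤ Bh i j) (hδ : ∀ j, 0 < δ j) {r : ℝ}
    (hr : 0 < r) {p : ι → ℝ} (hp : 0 ≤ p) (hsub : ∀ j, r * (δ j * p j) ≤ (Bh *ᵥ p) j)
    (hle : ∀ j, p j ≤ 1 - r⁻¹) : p ≤ endemicMap Bh δ p := fun j => by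
  have hg : 0 ≤ (Bh *ᵥ p) j := Bh.mulVec_nonneg_of_nonneg hBh hp j
  have hrecovery : δ j * p j ≤ r⁻¹ * (Bh *ᵥ p) j := by
    rw [le_inv_mul_iff₀ hr]; exact hsub j
  have hinfection : p j * (Bh *ᵥ p) j ≤ (1 - r⁻¹) * (Bh *ᵥ p) j :=
    mul_le_mul_of_nonneg_right (hle j) hg
  rw [endemicMap, le_div_iff₀ (by linarith [hδ j])]
  linarith

theorem exists_endemicMap_eq_of_le (hBh : ∀ i j, 0 ≤ Bh i j) (hδ : ∀ j, 0 < δ j)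
    {p₀ : ι → ℝ} (hp₀ : 0 ≤ p₀) (hle : p₀ ≤ endemicMap Bh δ p₀) :
    ∃ p, p₀ ≤ p ∧ endemicMap Bh δ p = p := by
  have hmaps : Set.MapsTo (endemicMap Bh δ) (Set.Icc 0 1) (Set.Icc 0 1) := fun p hp =>
    ⟨endemicMap_nonneg hBh hδ hp.1, fun j => (endemicMap_lt_one hBh hδ hp.1 j).le⟩
  have hmono : MonotoneOn (endemicMap Bh δ) (Set.Icc 0 1) := fun p hp _ _ hpq =>
    endemicMap_mono hBh hδ hp.1 hpq
  obtain ⟨p, hp, hFp⟩ := exists_fixedPoint_ge_of_mapsTo_Icc hmaps hmono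
    ⟨hp₀, hle.trans fun j => (endemicMap_lt_one hBh hδ hp₀ j).le⟩ hle
  exact ⟨p, hp.1, hFp⟩

theorem endemicMap_fixedPoint_le (hBh : ∀ i j, 0 ≤ Bh i j) (hδ : ∀ j, 0 < δ j)
    {p q : ι → ℝ} (hp : ∀ j, 0 < p j) (hq : ∀ j, 0 < q j) (hFp : endemicMap Bh δ p = p)
    (hFq : endemicMap Bh δ q = q) : p ≤ q := by
  by_contra hpq
  obtain ⟨j, hj⟩ : ∃ j, q j < p j := by simpa [Pi.le_def] using hpq
  obtain ⟨j₀, -, hmin⟩ :=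
    Finset.exists_min_image Finset.univ (fun j => q j / p j) ⟨j, Finset.mem_univ j⟩
  set θ := q j₀ / p j₀
  have hθ0 : 0 < θ := div_pos (hq j₀) (hp j₀)
  have hθ1 : θ < 1 := (hmin j (Finset.mem_univ j)).trans_lt ((div_lt_one (hp j)).mpr hj)
  have hθp : θ • p ≤ q := fun k => (le_div_iff₀ (hp k)).mp (hmin k (Finset.mem_univ k))
  have hqj₀ : q j₀ = θ * p j₀ := (div_mul_cancel₀ _ (hp j₀).ne').symm
  have hg : 0 < (Bh *ᵥ p) j₀ :=
    (mul_pos (hδ j₀) (hp j₀)).trans (mul_lt_mulVec_of_endemicMap_eq hBh hδ hp hFp j₀)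
  have hsubhom : θ * p j₀ < endemicMap Bh δ (θ • p) j₀ := by
    have hpj₀ : p j₀ = (Bh *ᵥ p) j₀ / (δ j₀ + (Bh *ᵥ p) j₀) := (congrFun hFp j₀).symm
    rw [hpj₀, endemicMap, mulVec_smul, Pi.smul_apply, smul_eq_mul, mul_div_assoc']
    exact div_lt_div_of_pos_left (mul_pos hθ0 hg) (by nlinarith [hδ j₀]) (by nlinarith)
  have hmono := endemicMap_mono hBh hδ (smul_nonneg hθ0.le fun k => (hp k).le) hθp j₀
  rw [hFq] at hmono
  linarith

theorem exists_endemicMap_eq_of_smul_le_mulVec (hBh : ∀ i j, 0 ≤ Bh i j) (hδ : ∀ j, 0 < δ j)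
    {r : ℝ} (hr : 1 < r) {v : ι → ℝ} (hv : 0 ≤ v) (hv0 : v ≠ 0)
    (hsub : ∀ j, r * (δ j * v j) ≤ (Bh *ᵥ v) j) :
    ∃ p, 0 ≤ p ∧ p ≠ 0 ∧ endemicMap Bh δ p = p := by
  set S := ∑ k, v k
  have hS : 0 < S := by
    obtain ⟨k, hk⟩ := Function.ne_iff.mp hv0
    exact ((hv k).lt_of_ne (Ne.symm hk)).trans_le
      (Finset.single_le_sum (fun l _ => hv l) (Finset.mem_univ k))
  have hr' : 0 < 1 - r⁻¹ := sub_pos.mpr (inv_lt_one_of_one_lt₀ hr)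
  set ε := (1 - r⁻¹) / S
  have hε : 0 < ε := div_pos hr' hS
  have hp₀ : 0 ≤ ε • v := smul_nonneg hε.le hv
  have hsub₀ : ∀ j, r * (δ j * (ε • v) j) ≤ (Bh *ᵥ (ε • v)) j := fun j => by
    rw [mulVec_smul, Pi.smul_apply, Pi.smul_apply, smul_eq_mul, smul_eq_mul]
    nlinarith [hsub j]
  have hle₀ : ∀ j, (ε • v) j ≤ 1 - r⁻¹ := fun j => calc
    (ε • v) j = ε * v j := rfl
    _ ≤ ε * S := mul_le_mul_of_nonneg_left
      (Finset.single_le_sum (fun l _ => hv l) (Finset.mem_univ j)) hε.le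
    _ = 1 - r⁻¹ := div_mul_cancel₀ _ hS.ne'
  obtain ⟨p, hp₀p, hFp⟩ := exists_endemicMap_eq_of_le hBh hδ hp₀
    (le_endemicMap_of_smul_le hBh hδ (by linarith) hp₀ hsub₀ hle₀)
  refine ⟨p, hp₀.trans hp₀p, fun hp => hv0 ?_, hFp⟩
  have hεv : ε • v = 0 := le_antisymm (hp ▸ hp₀p) hp₀
  exact (smul_eq_zero.mp hεv).resolve_left hε.ne'

end EndemicMap

theorem Matrix.mul_diagonal_inv_apply_nonneg {ι : Type*} [Fintype ι] [DecidableEq ι]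
    {B : Matrix ι ι ℝ} (hB : ∀ i j, 0 ≤ B i j) {δ : ι → ℝ} (hδ : ∀ j, 0 < δ j) (i j : ι) :
    0 ≤ (B * diagonal δ⁻¹) i j := by
  simpa [mul_diagonal] using mul_nonneg (hB i j) (inv_nonneg.mpr (hδ j).le)

theorem endemicMap_fixedPoint_pos {N : ℕ} {Bh : Matrix (Fin N) (Fin N) ℝ} {δ : Fin N → ℝ}
    (hBh : ∀ i j, 0 ≤ Bh i j) (hirr : MatIrreducible N Bh) (hδ : ∀ j, 0 < δ j)
    {p : Fin N → ℝ} (hp : 0 ≤ p) (hp0 : p ≠ 0) (hFp : endemicMap Bh δ p = p) :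
    ∀ j, 0 < p j :=
  (hirr.eq_zero_or_pos hBh hp fun j hj =>
    (endemicMap_eq_zero_iff hBh hδ hp j).mp ((congrFun hFp j).trans hj)).resolve_left hp0

theorem one_lt_specRad_of_endemicMap_eq {N : ℕ} [Nonempty (Fin N)]
    {Bh : Matrix (Fin N) (Fin N) ℝ} {δ : Fin N → ℝ} (hBh : ∀ i j, 0 ≤ Bh i j)
    (hδ : ∀ j, 0 < δ j) {p : Fin N → ℝ} (hp : ∀ j, 0 < p j) (hFp : endemicMap Bh δ p = p) :
    1 < specRad N (Bh * (diagonal δ)⁻¹) := by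
  have hδδ : δ⁻¹ * δ = 1 := funext fun j => inv_mul_cancel₀ (hδ j).ne'
  rw [inv_diagonal_of_ne_zero fun j => (hδ j).ne']
  refine one_lt_specRad_of_lt_mulVec (q := δ * p) (mul_diagonal_inv_apply_nonneg hBh hδ)
    (fun j => mul_pos (hδ j) (hp j)) fun j => ?_
  rw [mul_diagonal_mulVec, ← mul_assoc, hδδ, one_mul]
  exact mul_lt_mulVec_of_endemicMap_eq hBh hδ hp hFp j

theorem exists_endemicMap_eq_of_one_lt_specRad {N : ℕ} {Bh : Matrix (Fin N) (Fin N) ℝ}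
    {δ : Fin N → ℝ} (hBh : ∀ i j, 0 ≤ Bh i j) (hirr : MatIrreducible N Bh) (hδ : ∀ j, 0 < δ j)
    (h : 1 < specRad N (Bh * (diagonal δ)⁻¹)) :
    ∃ p, (∀ j, 0 < p j ∧ p j < 1) ∧ endemicMap Bh δ p = p := by
  have hδδ : δ * δ⁻¹ = 1 := funext fun j => mul_inv_cancel₀ (hδ j).ne'
  rw [inv_diagonal_of_ne_zero fun j => (hδ j).ne'] at h
  obtain ⟨μ, hμ, hμ1⟩ := (lt_specRad_iff_exists _ zero_le_one).mp h
  obtain ⟨w, hw, hw0, hμw⟩ :=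
    exists_norm_smul_le_mulVec_of_mem_spectrum (mul_diagonal_inv_apply_nonneg hBh hδ) hμ
  obtain ⟨p, hp, hp0, hFp⟩ := exists_endemicMap_eq_of_smul_le_mulVec hBh hδ hμ1 (v := δ⁻¹ * w)
    (fun j => mul_nonneg (inv_nonneg.mpr (hδ j).le) (hw j))
    (fun hv => hw0 (by rw [← one_mul w, ← hδδ, mul_assoc, hv, mul_zero]))
    (fun j => by
      rw [← Pi.mul_apply δ, ← mul_assoc, hδδ, one_mul, ← mul_diagonal_mulVec]
      exact hμw j)
  have hpos := endemicMap_fixedPoint_pos hBh hirr hδ hp hp0 hFp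
  exact ⟨p, fun j => ⟨hpos j, hFp ▸ endemicMap_lt_one hBh hδ hp j⟩, hFp⟩

/-- existence and uniqueness of the endemic equilibrium iff R₁ > 1. -/
theorem stmt3 {N : ℕ} (hN : 2 ≤ N) (Bh : Matrix (Fin N) (Fin N) ℝ) (δ : Fin N → ℝ)
    (hBh : ∀ j k, 0 ≤ Bh j k) (hBhirr : MatIrreducible N Bh)
    (hδ : ∀ j, 0 < δ j) :
    ((∃ pI : Fin N → ℝ, (∀ j, 0 < pI j) ∧
        ∀ j, pI j = (∑ k, Bh j k * pI k) / (δ j + ∑ k, Bh j k * pI k)) ↔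
      1 < specRad N (Bh * (Matrix.diagonal δ)⁻¹))
    ∧ (1 < specRad N (Bh * (Matrix.diagonal δ)⁻¹) →
        ∃! pI : Fin N → ℝ, (∀ j, 0 < pI j ∧ pI j < 1) ∧
          ∀ j, pI j = (∑ k, Bh j k * pI k) / (δ j + ∑ k, Bh j k * pI k)) := by
  have : Nonempty (Fin N) := ⟨⟨0, by omega⟩⟩
  have hfix : ∀ p : Fin N → ℝ, (∀ j, p j = (∑ k, Bh j k * p k) / (δ j + ∑ k, Bh j k * p k)) ↔
      endemicMap Bh δ p = p := fun p => by
    rw [funext_iff]; exact forall_congr' fun j => eq_comm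
  refine ⟨⟨?_, fun h => ?_⟩, fun h => ?_⟩
  · rintro ⟨p, hp, hFp⟩
    exact one_lt_specRad_of_endemicMap_eq hBh hδ hp ((hfix p).mp hFp)
  · obtain ⟨p, hp, hFp⟩ := exists_endemicMap_eq_of_one_lt_specRad hBh hBhirr hδ h
    exact ⟨p, fun j => (hp j).1, (hfix p).mpr hFp⟩
  · obtain ⟨p, hp, hFp⟩ := exists_endemicMap_eq_of_one_lt_specRad hBh hBhirr hδ h
    refine ⟨p, ⟨hp, (hfix p).mpr hFp⟩, fun q ⟨hq, hFq⟩ => le_antisymm ?_ ?_⟩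
    · exact endemicMap_fixedPoint_le hBh hδ (fun j => (hq j).1) (fun j => (hp j).1)
        ((hfix q).mp hFq) hFp
    · exact endemicMap_fixedPoint_le hBh hδ (fun j => (hp j).1) (fun j => (hq j).1)
        hFp ((hfix q).mp hFq)
end

section
/- Assume B and B̂ are irreducible. Let p* ∈ [0,1]^N with Λ(p*) > 0. Then the infection-free equilibrium (p*, 0) is unstable for the network SIRI dynamics restricted to Δ_N: there exists ε > 0 such that for every δ > 0 there is an initial condition y(0) ∈ Δ_N with ‖y(0) − (p*,0)‖ < δ whose solution y(t) satisfies ‖y(t) − (p*,0)‖ ≥ ε for some t > 0. -/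
open Matrix Filter Topology

/-!
`B*(p*) - D` is nonnegative off the diagonal and, since `B*(p*) ≥ c B̂` entrywise, irreducible.
A Perron–Frobenius argument therefore turns an eigenvalue of positive real part into a positive
left vector `w` with `w (B*(p*) - D) ≥ λ w`, `λ > 0`. The infection equation reads
`ṗ^I = (B*(p^S) - D - diag(p^I) B̂) p^I`, a small perturbation of this linear part near `(p*, 0)`,
so the weighted infection `w ⬝ p^I` grows at least like `e^{λ t / 2}` as long as the solution stays
near `(p*, 0)`. It is bounded on `Δ_N`, so every solution started at `((1 - c) p*, c)`, `c > 0`,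
must leave a fixed neighbourhood of the equilibrium.
-/

open Set
open scoped NNReal

namespace Matrix

variable {ι : Type*} [Fintype ι]

theorem pow_apply_le_pow_apply [DecidableEq ι] {P Q : Matrix ι ι ℝ} (hP : ∀ i j, 0 ≤ P i j)
    (hPQ : ∀ i j, P i j ≤ Q i j) (n : ℕ) (i j : ι) : (P ^ n) i j ≤ (Q ^ n) i j := by
  induction n generalizing i j with
  | zero => rfl
  | succ n ih =>
    rw [pow_succ, pow_succ, mul_apply, mul_apply]
    exact Finset.sum_le_sum fun k _ =>
      mul_le_mul (ih i k) (hPQ k j) (hP k j) ((pow_apply_nonneg hP n i k).trans (ih i k))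

theorem pow_apply_le_one_add_pow_apply [DecidableEq ι] {M : Matrix ι ι ℝ} (hM : ∀ i j, 0 ≤ M i j)
    {m K : ℕ} (hmK : m ≤ K) (i j : ι) : (M ^ m) i j ≤ ((1 + M) ^ K) i j := by
  have h1M : ∀ i j, 0 ≤ (1 + M) i j := fun i j => by
    by_cases h : i = j <;> simp [h, hM]
    linarith [hM j j]
  induction K generalizing m i j with
  | zero => rw [Nat.le_zero.1 hmK]; rfl
  | succ K ih =>
    have hsplit : ((1 + M) ^ (K + 1)) i j = ((1 + M) ^ K) i j + ((1 + M) ^ K * M) i j := by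
      rw [pow_succ, mul_add, mul_one, Matrix.add_apply]
    have hle : (M ^ (K + 1)) i j ≤ ((1 + M) ^ K * M) i j := by
      rw [pow_succ, mul_apply, mul_apply]
      exact Finset.sum_le_sum fun k _ => mul_le_mul_of_nonneg_right (ih le_rfl i k) (hM k j)
    have hMK := (pow_apply_nonneg hM (K + 1) i j).trans hle
    have h1MK := pow_apply_nonneg h1M K i j
    rw [hsplit]
    rcases Nat.lt_or_ge m (K + 1) with hm | hm
    · linarith [ih (Nat.lt_succ_iff.1 hm) i j]
    · rw [le_antisymm hmK hm]
      linarith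

theorem exists_one_add_pow_apply_pos [DecidableEq ι] {M : Matrix ι ι ℝ} (hM : ∀ i j, 0 ≤ M i j)
    (hirr : ∀ i j, ∃ m : ℕ, 0 < (M ^ m) i j) : ∃ K : ℕ, ∀ i j, 0 < ((1 + M) ^ K) i j := by
  choose m hm using hirr
  refine ⟨Finset.univ.sup fun p : ι × ι => m p.1 p.2, fun i j => ?_⟩
  have hmK : m i j ≤ Finset.univ.sup fun p : ι × ι => m p.1 p.2 :=
    Finset.le_sup (f := fun p : ι × ι => m p.1 p.2) (Finset.mem_univ (i, j))
  exact (hm i j).trans_le (pow_apply_le_one_add_pow_apply hM hmK i j)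

theorem pow_apply_pos_of_mul_le [DecidableEq ι] {G M : Matrix ι ι ℝ} (hG : ∀ i j, 0 ≤ G i j)
    {c : ℝ} (hc : 0 < c) (hcGM : ∀ i j, c * G i j ≤ M i j) {m : ℕ} {i j : ι}
    (hm : 0 < (G ^ m) i j) :
    0 < (M ^ m) i j := by
  have hcG : ((c • G) ^ m) i j = c ^ m * (G ^ m) i j := by
    rw [smul_pow, Matrix.smul_apply, smul_eq_mul]
  refine lt_of_lt_of_le ?_ (pow_apply_le_pow_apply (P := c • G) (fun i j => ?_) hcGM m i j)
  · rw [hcG]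
    exact mul_pos (pow_pos hc m) hm
  · exact mul_nonneg hc.le (hG i j)

theorem vecMul_le_vecMul_of_nonneg {M : Matrix ι ι ℝ} (hM : ∀ i j, 0 ≤ M i j) {u v : ι → ℝ}
    (huv : u ≤ v) : u ᵥ* M ≤ v ᵥ* M :=
  fun j => dotProduct_le_dotProduct_of_nonneg_right huv fun i => hM i j

/-- Collatz–Wielandt step: `w = u (1 + M)^K` is strictly positive and inherits `ρ u ≤ u M`
because `(1 + M)^K` commutes with `M`. -/
theorem exists_pos_smul_le_vecMul [DecidableEq ι] {M : Matrix ι ι ℝ} (hM : ∀ i j, 0 ≤ M i j)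
    (hirr : ∀ i j, ∃ m : ℕ, 0 < (M ^ m) i j) {u : ι → ℝ} (hu : 0 ≤ u) (hu0 : u ≠ 0) {ρ : ℝ}
    (hρ : ρ • u ≤ u ᵥ* M) : ∃ w : ι → ℝ, (∀ i, 0 < w i) ∧ ρ • w ≤ w ᵥ* M := by
  obtain ⟨K, hK⟩ := exists_one_add_pow_apply_pos hM hirr
  obtain ⟨i₀, hi₀⟩ : ∃ i, 0 < u i := by
    by_contra! h
    exact hu0 (le_antisymm h hu)
  refine ⟨u ᵥ* (1 + M) ^ K, fun j => ?_, ?_⟩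
  · exact (mul_pos hi₀ (hK i₀ j)).trans_le <| Finset.single_le_sum
      (f := fun i => u i * ((1 + M) ^ K) i j) (fun i _ => mul_nonneg (hu i) (hK i j).le)
      (Finset.mem_univ i₀)
  · have hcomm : M * (1 + M) ^ K = (1 + M) ^ K * M :=
      (((Commute.one_left M).add_left (Commute.refl M)).pow_left K).eq.symm
    calc ρ • (u ᵥ* (1 + M) ^ K) = (ρ • u) ᵥ* (1 + M) ^ K := (smul_vecMul ρ u _).symm
      _ ≤ u ᵥ* M ᵥ* (1 + M) ^ K := vecMul_le_vecMul_of_nonneg (fun i j => (hK i j).le) hρ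
      _ = u ᵥ* (1 + M) ^ K ᵥ* M := by rw [vecMul_vecMul, vecMul_vecMul, hcomm]

theorem exists_vecMul_eq_smul_of_mem_spectrum [DecidableEq ι] {A : Matrix ι ι ℂ} {μ : ℂ}
    (hμ : μ ∈ spectrum ℂ A) : ∃ x : ι → ℂ, x ≠ 0 ∧ x ᵥ* A = μ • x := by
  rw [spectrum.mem_iff, isUnit_iff_isUnit_det, isUnit_iff_ne_zero, not_not] at hμ
  obtain ⟨x, hx0, hx⟩ := exists_vecMul_eq_zero_iff.2 hμ
  refine ⟨x, hx0, ?_⟩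
  rw [vecMul_sub, Algebra.algebraMap_eq_smul_one, vecMul_smul, vecMul_one, sub_eq_zero] at hx
  exact hx.symm

theorem norm_smul_le_vecMul_norm {M : Matrix ι ι ℝ} (hM : ∀ i j, 0 ≤ M i j) {x : ι → ℂ} {ν : ℂ}
    (hx : x ᵥ* M.map (↑) = ν • x) : ‖ν‖ • (fun i => ‖x i‖) ≤ (fun i => ‖x i‖) ᵥ* M := by
  intro j
  calc ‖ν‖ * ‖x j‖ = ‖(x ᵥ* M.map (↑)) j‖ := by rw [hx, Pi.smul_apply, smul_eq_mul, norm_mul]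
    _ ≤ ∑ i, ‖x i * M i j‖ := norm_sum_le _ _
    _ = ∑ i, ‖x i‖ * M i j := by
      simp only [norm_mul, Complex.norm_real, Real.norm_eq_abs, abs_of_nonneg (hM _ j)]

end Matrix

theorem exists_mem_spectrum_re_pos_of_specAbsc_pos {N : ℕ} {A : Matrix (Fin N) (Fin N) ℝ}
    (h : 0 < specAbsc N A) : ∃ μ ∈ spectrum ℂ (A.map Complex.ofReal), 0 < μ.re := by
  by_contra! hle
  exact h.not_ge (Real.sSup_nonpos fun r ⟨μ, hμ, hr⟩ => hr ▸ hle μ hμ)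

/-- If `x A = μ x` with `re μ > 0`, then `|x|` satisfies `‖μ + s‖ |x| ≤ |x| (A + s)`, and
`‖μ + s‖ - s ≥ re μ`. -/
theorem exists_pos_smul_le_vecMul_of_specAbsc_pos {N : ℕ} {A : Matrix (Fin N) (Fin N) ℝ} {s : ℝ}
    (hM : ∀ i j, 0 ≤ (A + s • 1) i j) (hirr : ∀ i j, ∃ m : ℕ, 0 < ((A + s • 1) ^ m) i j)
    (hpos : 0 < specAbsc N A) :
    ∃ w : Fin N → ℝ, (∀ i, 0 < w i) ∧ ∃ lam > (0 : ℝ), lam • w ≤ w ᵥ* A := by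
  obtain ⟨μ, hμ, hre⟩ := exists_mem_spectrum_re_pos_of_specAbsc_pos hpos
  obtain ⟨x, hx0, hx⟩ := exists_vecMul_eq_smul_of_mem_spectrum hμ
  have hs : (s • (1 : Matrix (Fin N) (Fin N) ℝ)).map Complex.ofReal = (s : ℂ) • 1 := by
    ext i j
    by_cases h : i = j <;> simp [h]
  have hxM : x ᵥ* (A + s • 1).map Complex.ofReal = (μ + s) • x := by
    rw [Matrix.map_add _ Complex.ofReal_add, hs, vecMul_add, vecMul_smul, vecMul_one, hx, add_smul]
  have hu0 : (fun i => ‖x i‖) ≠ 0 := fun h => hx0 (funext fun i => norm_eq_zero.1 (congrFun h i))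
  obtain ⟨w, hw, hwM⟩ := exists_pos_smul_le_vecMul hM hirr (fun i => norm_nonneg (x i)) hu0
    (norm_smul_le_vecMul_norm hM hxM)
  refine ⟨w, hw, ‖μ + s‖ - s, ?_, fun k => ?_⟩
  · have := Complex.re_le_norm (μ + s)
    simp only [Complex.add_re, Complex.ofReal_re] at this
    linarith
  · have := hwM k
    simp only [vecMul_add, vecMul_smul, vecMul_one, Pi.add_apply, Pi.smul_apply, smul_eq_mul]
      at this ⊢
    linarith

theorem exists_pos_mul_le {α : Type*} [Finite α] {f g : α → ℝ} (hf : ∀ a, 0 ≤ f a)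
    (hfg : ∀ a, f a = 0 → g a = 0) : ∃ c > 0, ∀ a, c * g a ≤ f a := by
  have h : ∀ᶠ c in 𝓝 (0 : ℝ), ∀ a, c * g a ≤ f a := by
    refine Filter.eventually_all.2 fun a => ?_
    rcases (hf a).eq_or_lt with ha | ha
    · exact Filter.Eventually.of_forall fun c => by simp [hfg a ha.symm, ← ha]
    · exact ((continuous_mul_const (g a)).tendsto' 0 0 (zero_mul _)).eventually (ge_mem_nhds ha)
  obtain ⟨c, hc, hc0⟩ := ((h.filter_mono nhdsWithin_le_nhds).and
    (self_mem_nhdsWithin : ∀ᶠ c in 𝓝[>] (0 : ℝ), 0 < c)).exists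
  exact ⟨c, hc0, hc⟩

theorem Bstar_apply {N : ℕ} (B Bh : Matrix (Fin N) (Fin N) ℝ) (p : Fin N → ℝ) (j k : Fin N) :
    Bstar N B Bh p j k = (1 - p j) * Bh j k + p j * B j k := by
  simp [Bstar, Matrix.sub_mul, diagonal_mul]
  ring

section SIRI

variable {N : ℕ} {B Bh : Matrix (Fin N) (Fin N) ℝ} {δ : Fin N → ℝ}

theorem Bstar_mulVec_apply (p v : Fin N → ℝ) (j : Fin N) :
    (Bstar N B Bh p *ᵥ v) j = (1 - p j) * (Bh *ᵥ v) j + p j * (B *ᵥ v) j := by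
  simp [Bstar, add_mulVec, ← mulVec_mulVec, sub_mulVec, mulVec_diagonal]
  ring

theorem exists_pos_smul_le_vecMul_Bstar_sub_diagonal {p : Fin N → ℝ}
    (hB : ∀ j k, 0 ≤ B j k) (hBh : ∀ j k, 0 ≤ Bh j k) (hz : ∀ j k, B j k = 0 → Bh j k = 0)
    (hBhirr : MatIrreducible N Bh) (hδ : ∀ j, 0 ≤ δ j) (hp : p ∈ cube N)
    (hpos : 0 < specAbsc N (Bstar N B Bh p - Matrix.diagonal δ)) :
    ∃ w : Fin N → ℝ, (∀ i, 0 < w i) ∧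
      ∃ lam > (0 : ℝ), lam • w ≤ w ᵥ* (Bstar N B Bh p - Matrix.diagonal δ) := by
  obtain ⟨c, hc, hcmin⟩ := exists_pos_mul_le (g := fun q : Fin N × Fin N => Bh q.1 q.2)
    (f := fun q => min (B q.1 q.2) (Bh q.1 q.2)) (fun q => le_min (hB _ _) (hBh _ _)) fun q hq => by
      rcases min_eq_iff.1 hq with h | h
      · exact hz _ _ h.1
      · exact h.1
  have hcBstar : ∀ j k, c * Bh j k ≤ Bstar N B Bh p j k := fun j k =>
    calc c * Bh j k ≤ min (B j k) (Bh j k) := hcmin (j, k)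
      _ = (1 - p j) * min (B j k) (Bh j k) + p j * min (B j k) (Bh j k) := by ring
      _ ≤ (1 - p j) * Bh j k + p j * B j k :=
        add_le_add (mul_le_mul_of_nonneg_left (min_le_right _ _) (by linarith [(hp j).2]))
          (mul_le_mul_of_nonneg_left (min_le_left _ _) (hp j).1)
      _ = Bstar N B Bh p j k := (Bstar_apply B Bh p j k).symm
  set s := ∑ j, δ j
  have hshift : ∀ j k, Bstar N B Bh p j k ≤ (Bstar N B Bh p - Matrix.diagonal δ + s • 1) j k := by
    intro j k
    by_cases h : j = k
    · subst h
      simp only [Matrix.add_apply, Matrix.sub_apply, diagonal_apply_eq, Matrix.smul_apply,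
        one_apply_eq, smul_eq_mul, mul_one]
      linarith [Finset.single_le_sum (fun i _ => hδ i) (Finset.mem_univ j)]
    · simp [diagonal_apply_ne _ h, one_apply_ne h]
  exact exists_pos_smul_le_vecMul_of_specAbsc_pos
    (fun j k => (mul_nonneg hc.le (hBh j k)).trans ((hcBstar j k).trans (hshift j k)))
    (fun i j => (hBhirr i j).imp fun m hm =>
      pow_apply_pos_of_mul_le hBh hc (fun j k => (hcBstar j k).trans (hshift j k)) hm.2)
    hpos

theorem siriField_snd_eq_mulVec (D : Matrix (Fin N) (Fin N) ℝ) (z : (Fin N → ℝ) × (Fin N → ℝ)) :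
    (siriField N B Bh D z).2 = (Bstar N B Bh z.1 - D - Matrix.diagonal z.2 * Bh) *ᵥ z.2 := by
  ext j
  simp [siriField, sub_mulVec, ← mulVec_mulVec, mulVec_diagonal]

theorem siriField_snd_apply (z : (Fin N → ℝ) × (Fin N → ℝ)) (j : Fin N) :
    (siriField N B Bh (Matrix.diagonal δ) z).2 j
      = (Bstar N B Bh z.1 *ᵥ z.2) j - δ j * z.2 j - z.2 j * (Bh *ᵥ z.2) j := by
  simp [siriField, sub_mulVec, mulVec_diagonal]

theorem contDiff_siriField (D : Matrix (Fin N) (Fin N) ℝ) : ContDiff ℝ 1 (siriField N B Bh D) := by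
  have h : siriField N B Bh D = fun z =>
      (fun j => -(z.1 j * ∑ k, B j k * z.2 k),
       fun j => ∑ k, ((1 - z.1 j) * Bh j k + z.1 j * B j k - D j k - z.2 j * Bh j k) * z.2 k) := by
    funext z
    refine Prod.ext rfl ?_
    rw [siriField_snd_eq_mulVec]
    ext j
    simp [mulVec, dotProduct, Bstar_apply, diagonal_mul]
  rw [h]
  fun_prop

theorem inSimplex.norm_le_one {z : (Fin N → ℝ) × (Fin N → ℝ)} (hz : inSimplex N z) : ‖z‖ ≤ 1 := by
  rw [Prod.norm_def]
  refine max_le ((pi_norm_le_iff_of_nonneg zero_le_one).2 fun j => ?_)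
    ((pi_norm_le_iff_of_nonneg zero_le_one).2 fun j => ?_) <;>
  rw [Real.norm_eq_abs, abs_le] <;> constructor <;> linarith [(hz j).1, (hz j).2.1, (hz j).2.2]

theorem siriField_snd_nonneg_of_snd_eq_zero (hB : ∀ j k, 0 ≤ B j k) (hBh : ∀ j k, 0 ≤ Bh j k)
    {z : (Fin N → ℝ) × (Fin N → ℝ)} (hz : inSimplex N z) {j : Fin N} (hj : z.2 j = 0) :
    0 ≤ (siriField N B Bh (Matrix.diagonal δ) z).2 j := by
  have hI : 0 ≤ z.2 := fun k => (hz k).2.1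
  rw [siriField_snd_apply, hj, mul_zero, zero_mul, sub_zero, sub_zero, Bstar_mulVec_apply]
  exact add_nonneg
    (mul_nonneg (by linarith [(hz j).2.2, hI j])
      (dotProduct_nonneg_of_nonneg (fun k => hBh j k) hI))
    (mul_nonneg (hz j).1 (dotProduct_nonneg_of_nonneg (fun k => hB j k) hI))

theorem siriField_fst_add_snd_of_add_eq_one {z : (Fin N → ℝ) × (Fin N → ℝ)} {j : Fin N}
    (hj : z.1 j + z.2 j = 1) :
    (siriField N B Bh (Matrix.diagonal δ) z).1 j + (siriField N B Bh (Matrix.diagonal δ) z).2 j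
      = -(δ j * z.2 j) := by
  rw [siriField_snd_apply, Bstar_mulVec_apply, show 1 - z.1 j = z.2 j by linarith]
  simp only [siriField]
  ring

end SIRI

theorem lipschitzWith_pi_of_forall {α ι : Type*} [PseudoMetricSpace α] [Fintype ι] {K : ℝ≥0}
    {f : α → ι → ℝ} (hf : ∀ j, LipschitzWith K fun x => f x j) : LipschitzWith K f :=
  LipschitzWith.of_dist_le_mul fun x y =>
    (dist_pi_le_iff (by positivity)).2 fun j => (hf j).dist_le_mul x y

noncomputable def simplexRetraction (N : ℕ) (y : (Fin N → ℝ) × (Fin N → ℝ)) :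
    (Fin N → ℝ) × (Fin N → ℝ) :=
  (fun j => max 0 (min (y.1 j) 1), fun j => max 0 (min (y.2 j) (1 - max 0 (min (y.1 j) 1))))

section Retraction

variable {N : ℕ}

theorem inSimplex_simplexRetraction (y : (Fin N → ℝ) × (Fin N → ℝ)) :
    inSimplex N (simplexRetraction N y) := fun j => by
  simp only [simplexRetraction, max_def, min_def]
  split_ifs <;> refine ⟨?_, ?_, ?_⟩ <;> linarith

theorem simplexRetraction_eq_self {y : (Fin N → ℝ) × (Fin N → ℝ)} (hy : inSimplex N y) :
    simplexRetraction N y = y := by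
  ext j <;> have := hy j <;> simp only [simplexRetraction, max_def, min_def] <;> split_ifs <;>
    linarith

theorem simplexRetraction_fst_of_neg {y : (Fin N → ℝ) × (Fin N → ℝ)} {j : Fin N} (h : y.1 j < 0) :
    (simplexRetraction N y).1 j = 0 := by
  simp only [simplexRetraction, max_def, min_def]
  split_ifs <;> linarith

theorem simplexRetraction_snd_of_neg {y : (Fin N → ℝ) × (Fin N → ℝ)} {j : Fin N} (h : y.2 j < 0) :
    (simplexRetraction N y).2 j = 0 := by
  simp only [simplexRetraction, max_def, min_def]
  split_ifs <;> linarith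

theorem simplexRetraction_fst_add_snd_of_one_lt {y : (Fin N → ℝ) × (Fin N → ℝ)} {j : Fin N}
    (h : 1 < y.1 j + y.2 j) :
    (simplexRetraction N y).1 j + (simplexRetraction N y).2 j = 1 := by
  simp only [simplexRetraction, max_def, min_def]
  split_ifs <;> linarith

theorem lipschitzWith_simplexRetraction : LipschitzWith 1 (simplexRetraction N) := by
  have hfst (j : Fin N) : LipschitzWith 1 fun y : (Fin N → ℝ) × (Fin N → ℝ) => y.1 j := by
    have h := (LipschitzWith.eval (α := fun _ : Fin N => ℝ) j).comp
      (LipschitzWith.prod_fst (α := Fin N → ℝ) (β := Fin N → ℝ))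
    rwa [one_mul] at h
  have hsnd (j : Fin N) : LipschitzWith 1 fun y : (Fin N → ℝ) × (Fin N → ℝ) => y.2 j := by
    have h := (LipschitzWith.eval (α := fun _ : Fin N => ℝ) j).comp
      (LipschitzWith.prod_snd (α := Fin N → ℝ) (β := Fin N → ℝ))
    rwa [one_mul] at h
  have hS (j : Fin N) := ((hfst j).min_const 1).const_max 0
  have hI (j : Fin N) : LipschitzWith 1 fun y : (Fin N → ℝ) × (Fin N → ℝ) =>
      max 0 (min (y.2 j) (1 - max 0 (min (y.1 j) 1))) := by
    simpa using ((hsnd j).min ((LipschitzWith.const (1 : ℝ)).sub (hS j))).const_max 0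
  have h := (lipschitzWith_pi_of_forall hS).prodMk (lipschitzWith_pi_of_forall hI)
  rw [max_self] at h
  exact h

end Retraction

theorem exists_forall_hasDerivAt_of_lipschitzWith {E : Type*} [NormedAddCommGroup E]
    [NormedSpace ℝ E] [CompleteSpace E] {g : E → E} {K C : ℝ≥0} (hg : LipschitzWith K g)
    (hC : ∀ x, ‖g x‖ ≤ C) (x₀ : E) : ∃ y : ℝ → E, y 0 = x₀ ∧ ∀ t, HasDerivAt y (g (y t)) t := by
  have hPL (n : ℕ) : IsPicardLindelof (fun _ => g) (tmin := -(n + 1 : ℝ)) (tmax := n + 1)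
      ⟨0, by constructor <;> linarith [n.cast_nonneg (α := ℝ)]⟩ x₀ (C * (n + 1)) 0 C K :=
    IsPicardLindelof.of_time_independent (fun x _ => hC x) hg.lipschitzOnWith (by simp)
  choose f hf0 hf using fun n => (hPL n).exists_eq_forall_mem_Icc_hasDerivWithinAt₀
  have hfD (n : ℕ) {t : ℝ} (ht : |t| < n + 1) : HasDerivAt (f n) (g (f n t)) t := by
    obtain ⟨h₁, h₂⟩ := abs_lt.1 ht
    exact (hf n t ⟨h₁.le, h₂.le⟩).hasDerivAt (Icc_mem_nhds h₁ h₂)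
  have hfeq {n m : ℕ} (hnm : n ≤ m) {t : ℝ} (ht : |t| < n + 1) : f n t = f m t := by
    have hnm' : (n : ℝ) ≤ m := Nat.cast_le.2 hnm
    exact ODE_solution_unique_of_mem_Ioo (v := fun _ => g) (s := fun _ => univ) (t₀ := 0)
      (fun _ _ => hg.lipschitzOnWith) ⟨by linarith, by linarith⟩
      (fun s hs => ⟨hfD n (abs_lt.2 hs), trivial⟩)
      (fun s hs => ⟨hfD m (abs_lt.2 ⟨by linarith [hs.1], by linarith [hs.2]⟩), trivial⟩)
      ((hf0 n).trans (hf0 m).symm) (abs_lt.1 ht)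
  have hy (n : ℕ) {t : ℝ} (ht : |t| < n + 1) : f ⌊|t|⌋₊ t = f n t :=
    (hfeq (le_max_left _ n) (Nat.lt_floor_add_one _)).trans (hfeq (le_max_right _ _) ht).symm
  refine ⟨fun t => f ⌊|t|⌋₊ t, by simpa using hf0 0, fun t => ?_⟩
  have ht : |t| < (⌊|t|⌋₊ + 1 : ℕ) + 1 := by push_cast; linarith [Nat.lt_floor_add_one |t|]
  have hnear : (fun s => f ⌊|s|⌋₊ s) =ᶠ[𝓝 t] f (⌊|t|⌋₊ + 1) := by
    filter_upwards [(continuous_abs.tendsto t).eventually (gt_mem_nhds ht)] with s hs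
    exact hy _ hs
  simp only [hy _ ht]
  exact (hfD _ ht).congr_of_eventuallyEq hnear

theorem nonneg_of_hasDerivAt_of_neg {h h' : ℝ → ℝ} (hd : ∀ t, 0 ≤ t → HasDerivAt h (h' t) t)
    (h0 : 0 ≤ h 0) (hneg : ∀ t, 0 ≤ t → h t < 0 → 0 ≤ h' t) {t : ℝ} (ht : 0 ≤ t) : 0 ≤ h t := by
  by_contra! hlt
  have hcont : ContinuousOn h (Icc 0 t) := fun s hs => (hd s hs.1).continuousAt.continuousWithinAt
  have hclosed : IsClosed (Icc 0 t ∩ h ⁻¹' Ici 0) :=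
    hcont.preimage_isClosed_of_isClosed isClosed_Icc isClosed_Ici
  -- `s` is the last time in `[0, t]` at which `h ≥ 0`
  obtain ⟨s, ⟨hs, hhs⟩, hlast⟩ :=
    (isCompact_Icc.of_isClosed_subset hclosed inter_subset_left).exists_isGreatest
      ⟨0, ⟨le_rfl, ht⟩, h0⟩
  have hbelow : ∀ r ∈ Ioo s t, h r < 0 := fun r hr => by
    by_contra! hr0
    exact hr.1.not_ge (hlast ⟨⟨hs.1.trans hr.1.le, hr.2.le⟩, hr0⟩)
  have hmono : MonotoneOn h (Icc s t) := by
    refine monotoneOn_of_hasDerivWithinAt_nonneg (f' := h') (convex_Icc s t)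
      (hcont.mono (Icc_subset_Icc hs.1 le_rfl)) (fun r hr => ?_) (fun r hr => ?_) <;>
      rw [interior_Icc] at hr
    · exact (hd r (hs.1.trans hr.1.le)).hasDerivWithinAt
    · exact hneg r (hs.1.trans hr.1.le) (hbelow r hr)
  have := hmono ⟨le_rfl, hs.2⟩ ⟨hs.2, le_rfl⟩ hs.2
  exact hlt.not_ge (le_trans (mem_Ici.1 hhs) this)

theorem mul_exp_le_of_hasDerivAt {f f' : ℝ → ℝ} {a : ℝ} (hf : ∀ t, 0 ≤ t → HasDerivAt f (f' t) t)
    (hf' : ∀ t, 0 ≤ t → a * f t ≤ f' t) {t : ℝ} (ht : 0 ≤ t) :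
    f 0 * Real.exp (a * t) ≤ f t := by
  have hE (s : ℝ) : HasDerivAt (fun s => Real.exp (-(a * s))) (Real.exp (-(a * s)) * -a) s := by
    simpa using ((hasDerivAt_id s).const_mul a).neg.exp
  have hG (s : ℝ) (hs : 0 ≤ s) : HasDerivAt (fun s => f s * Real.exp (-(a * s)))
      (f' s * Real.exp (-(a * s)) + f s * (Real.exp (-(a * s)) * -a)) s :=
    (hf s hs).mul (hE s)
  have hmono : MonotoneOn (fun s => f s * Real.exp (-(a * s))) (Ici 0) := by
    refine monotoneOn_of_hasDerivWithinAt_nonneg (convex_Ici 0)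
      (f' := fun s => f' s * Real.exp (-(a * s)) + f s * (Real.exp (-(a * s)) * -a))
      (fun s hs => (hG s hs).continuousAt.continuousWithinAt) (fun s hs => ?_) (fun s hs => ?_) <;>
      rw [interior_Ici] at hs
    · exact (hG s hs.le).hasDerivWithinAt
    · nlinarith [Real.exp_pos (-(a * s)), hf' s hs.le]
  have h := hmono self_mem_Ici ht ht
  simp only [mul_zero, neg_zero, Real.exp_zero, mul_one, Real.exp_neg] at h
  rwa [le_mul_inv_iff₀ (Real.exp_pos _)] at h

theorem HasDerivAt.fst_apply {ι : Type*} [Fintype ι] {y : ℝ → (ι → ℝ) × (ι → ℝ)}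
    {v : (ι → ℝ) × (ι → ℝ)} {t : ℝ} (hy : HasDerivAt y v t) (j : ι) :
    HasDerivAt (fun t => (y t).1 j) (v.1 j) t :=
  hasDerivAt_pi.1 (hasFDerivAt_fst.comp_hasDerivAt t hy) j

theorem HasDerivAt.snd_apply {ι : Type*} [Fintype ι] {y : ℝ → (ι → ℝ) × (ι → ℝ)}
    {v : (ι → ℝ) × (ι → ℝ)} {t : ℝ} (hy : HasDerivAt y v t) (j : ι) :
    HasDerivAt (fun t => (y t).2 j) (v.2 j) t :=
  hasDerivAt_pi.1 (hasFDerivAt_snd.comp_hasDerivAt t hy) j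

section Dynamics

variable {N : ℕ} {B Bh : Matrix (Fin N) (Fin N) ℝ} {δ : Fin N → ℝ}

theorem exists_lipschitzWith_bound_siriField_comp_simplexRetraction
    (D : Matrix (Fin N) (Fin N) ℝ) :
    ∃ K C : ℝ≥0, LipschitzWith K (siriField N B Bh D ∘ simplexRetraction N) ∧
      ∀ y, ‖(siriField N B Bh D ∘ simplexRetraction N) y‖ ≤ C := by
  have hball := isCompact_closedBall (0 : (Fin N → ℝ) × (Fin N → ℝ)) 1
  have hr : MapsTo (simplexRetraction N) univ (Metric.closedBall 0 1) := fun y _ =>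
    mem_closedBall_zero_iff.2 (inSimplex_simplexRetraction y).norm_le_one
  have hF := contDiff_siriField (B := B) (Bh := Bh) D
  obtain ⟨K, hK⟩ := hF.locallyLipschitz.locallyLipschitzOn.exists_lipschitzOnWith_of_compact hball
  obtain ⟨C, hC⟩ := hball.exists_bound_of_continuousOn hF.continuous.continuousOn
  exact ⟨K * 1, C.toNNReal,
    lipschitzOnWith_univ.1 (hK.comp lipschitzWith_simplexRetraction.lipschitzOnWith hr),
    fun y => (hC _ (hr (mem_univ y))).trans (Real.le_coe_toNNReal C)⟩

/-- The field is only Lipschitz on bounded sets, so we solve the globally Lipschitz system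
`ẏ = F (r y)`, `r` the retraction onto `Δ_N`; the barrier principle shows that its solutions
never leave `Δ_N`, where `r` is the identity. -/
theorem exists_isSol_inSimplex (hB : ∀ j k, 0 ≤ B j k) (hBh : ∀ j k, 0 ≤ Bh j k)
    (hδ : ∀ j, 0 ≤ δ j) {x₀ : (Fin N → ℝ) × (Fin N → ℝ)} (hx₀ : inSimplex N x₀) :
    ∃ y : ℝ → (Fin N → ℝ) × (Fin N → ℝ), y 0 = x₀ ∧ IsSol N B Bh (Matrix.diagonal δ) y ∧
      ∀ t, 0 ≤ t → inSimplex N (y t) := by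
  obtain ⟨K, C, hLip, hC⟩ := exists_lipschitzWith_bound_siriField_comp_simplexRetraction
    (B := B) (Bh := Bh) (Matrix.diagonal δ)
  obtain ⟨y, hy0, hy⟩ := exists_forall_hasDerivAt_of_lipschitzWith hLip hC x₀
  have hS (j : Fin N) {t : ℝ} (ht : 0 ≤ t) : 0 ≤ (y t).1 j := by
    refine nonneg_of_hasDerivAt_of_neg (fun s _ => (hy s).fst_apply j) (hy0 ▸ (hx₀ j).1)
      (fun s _ hs => ?_) ht
    simp [siriField, simplexRetraction_fst_of_neg hs]
  have hI (j : Fin N) {t : ℝ} (ht : 0 ≤ t) : 0 ≤ (y t).2 j :=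
    nonneg_of_hasDerivAt_of_neg (fun s _ => (hy s).snd_apply j) (hy0 ▸ (hx₀ j).2.1)
      (fun s _ hs => siriField_snd_nonneg_of_snd_eq_zero hB hBh (inSimplex_simplexRetraction _)
        (simplexRetraction_snd_of_neg hs)) ht
  have hR (j : Fin N) {t : ℝ} (ht : 0 ≤ t) : 0 ≤ 1 - ((y t).1 j + (y t).2 j) := by
    refine nonneg_of_hasDerivAt_of_neg (h := fun t => 1 - ((y t).1 j + (y t).2 j))
      (fun s _ => (((hy s).fst_apply j).add ((hy s).snd_apply j)).const_sub 1)
      (by rw [hy0]; linarith [(hx₀ j).2.2]) (fun s _ hs => ?_) ht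
    have hsum := simplexRetraction_fst_add_snd_of_one_lt (by linarith : 1 < (y s).1 j + (y s).2 j)
    rw [Function.comp_apply, siriField_fst_add_snd_of_add_eq_one hsum]
    nlinarith [hδ j, (inSimplex_simplexRetraction (y s) j).2.1]
  have hΔ (t : ℝ) (ht : 0 ≤ t) : inSimplex N (y t) := fun j =>
    ⟨hS j ht, hI j ht, by linarith [hR j ht]⟩
  refine ⟨y, hy0, fun t ht => ?_, hΔ⟩
  have h := hy t
  rwa [Function.comp_apply, simplexRetraction_eq_self (hΔ t ht)] at h

theorem exists_pos_growth_near_equilibrium (D : Matrix (Fin N) (Fin N) ℝ) {p w : Fin N → ℝ} {a : ℝ}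
    (ha : ∀ k, a * w k < (w ᵥ* (Bstar N B Bh p - D)) k) :
    ∃ ε > (0 : ℝ), ∀ z : (Fin N → ℝ) × (Fin N → ℝ), ‖z - (p, 0)‖ < ε → 0 ≤ z.2 →
      a * (w ⬝ᵥ z.2) ≤ w ⬝ᵥ (siriField N B Bh D z).2 := by
  have hcont : Continuous fun z : (Fin N → ℝ) × (Fin N → ℝ) =>
      w ᵥ* (Bstar N B Bh z.1 - D - Matrix.diagonal z.2 * Bh) := by
    unfold Bstar
    fun_prop
  have hev : ∀ᶠ z in 𝓝 (p, (0 : Fin N → ℝ)),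
      ∀ k, a * w k < (w ᵥ* (Bstar N B Bh z.1 - D - Matrix.diagonal z.2 * Bh)) k := by
    refine Filter.eventually_all.2 fun k =>
      ((continuous_apply k).comp hcont).continuousAt.eventually (lt_mem_nhds ?_)
    simpa using ha k
  obtain ⟨ε, hε, h⟩ := Metric.eventually_nhds_iff.1 hev
  refine ⟨ε, hε, fun z hz hI => ?_⟩
  rw [siriField_snd_eq_mulVec, dotProduct_mulVec, ← smul_eq_mul, ← smul_dotProduct]
  exact dotProduct_le_dotProduct_of_nonneg_right
    (fun k => (h (by rwa [dist_eq_norm]) k).le) hI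

theorem exists_pos_le_norm_sub_of_growth {D : Matrix (Fin N) (Fin N) ℝ}
    {x : (Fin N → ℝ) × (Fin N → ℝ)} {w : Fin N → ℝ} (hw : 0 ≤ w) {a ε : ℝ} (ha : 0 < a)
    (hgrowth : ∀ z : (Fin N → ℝ) × (Fin N → ℝ), ‖z - x‖ < ε → 0 ≤ z.2 →
      a * (w ⬝ᵥ z.2) ≤ w ⬝ᵥ (siriField N B Bh D z).2)
    {y : ℝ → (Fin N → ℝ) × (Fin N → ℝ)} (hy : IsSol N B Bh D y)
    (hyΔ : ∀ t, 0 ≤ t → inSimplex N (y t)) (hy0 : ‖y 0 - x‖ < ε) (hL0 : 0 < w ⬝ᵥ (y 0).2) :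
    ∃ t > (0 : ℝ), ε ≤ ‖y t - x‖ := by
  by_contra! hnear
  have hball (t : ℝ) (ht : 0 ≤ t) : ‖y t - x‖ < ε := by
    rcases ht.eq_or_lt with rfl | ht
    exacts [hy0, hnear t ht]
  have hL (t : ℝ) (ht : 0 ≤ t) : w ⬝ᵥ (y 0).2 * Real.exp (a * t) ≤ w ⬝ᵥ (1 : Fin N → ℝ) := by
    refine (mul_exp_le_of_hasDerivAt (f := fun t => w ⬝ᵥ (y t).2)
      (fun s hs => HasDerivAt.fun_sum fun j _ => ((hy s hs).snd_apply j).const_mul (w j))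
      (fun s hs => hgrowth _ (hball s hs) fun k => (hyΔ s hs k).2.1) ht).trans ?_
    exact dotProduct_le_dotProduct_of_nonneg_left
      (fun k => by simp only [Pi.one_apply]; linarith [(hyΔ t ht k).1, (hyΔ t ht k).2.2]) hw
  have hexp := (Real.tendsto_exp_atTop.comp (tendsto_id.const_mul_atTop ha)).const_mul_atTop hL0
  obtain ⟨t, hbig, ht⟩ :=
    ((hexp.eventually_gt_atTop (w ⬝ᵥ (1 : Fin N → ℝ))).and (eventually_ge_atTop 0)).exists
  exact (hL t ht).not_gt hbig

end Dynamics

theorem exists_inSimplex_norm_sub_le {N : ℕ} {p : Fin N → ℝ} (hp : p ∈ cube N) {c : ℝ}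
    (hc0 : 0 ≤ c) (hc1 : c ≤ 1) :
    ∃ x₀ : (Fin N → ℝ) × (Fin N → ℝ), inSimplex N x₀ ∧ ‖x₀ - (p, 0)‖ ≤ c ∧ x₀.2 = fun _ => c := by
  refine ⟨((1 - c) • p, fun _ => c), fun j => ?_, ?_, rfl⟩
  · have := hp j
    simp only [Pi.smul_apply, smul_eq_mul]
    refine ⟨by nlinarith, hc0, by nlinarith⟩
  · rw [Prod.norm_def]
    refine max_le ((pi_norm_le_iff_of_nonneg hc0).2 fun j => ?_)
      ((pi_norm_le_iff_of_nonneg hc0).2 fun j => ?_)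
    · have := hp j
      simp only [Prod.fst_sub, Pi.sub_apply, Pi.smul_apply, smul_eq_mul, Real.norm_eq_abs]
      rw [abs_le]
      constructor <;> nlinarith
    · simp [abs_of_nonneg hc0]

theorem stmt6_general {N : ℕ} (hN : 2 ≤ N) (B Bh : Matrix (Fin N) (Fin N) ℝ) (δ : Fin N → ℝ)
    (hB : ∀ j k, 0 ≤ B j k)
    (hBh : ∀ j k, 0 ≤ Bh j k) (hz : ∀ j k, B j k = 0 → Bh j k = 0)
    (hBhirr : MatIrreducible N Bh)
    (hδ : ∀ j, 0 < δ j)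
    (pstar : Fin N → ℝ) (hp : pstar ∈ cube N)
    (hpos : 0 < specAbsc N (Bstar N B Bh pstar - Matrix.diagonal δ)) :
    ∃ ε > (0:ℝ), ∀ d > (0:ℝ),
      ∃ y : ℝ → (Fin N → ℝ) × (Fin N → ℝ),
        IsSol N B Bh (Matrix.diagonal δ) y ∧
        inSimplex N (y 0) ∧
        (∀ t : ℝ, 0 ≤ t → inSimplex N (y t)) ∧
        ‖y 0 - (pstar, (0 : Fin N → ℝ))‖ < d ∧
        ∃ t > (0:ℝ), ε ≤ ‖y t - (pstar, (0 : Fin N → ℝ))‖ := by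
  have : NeZero N := ⟨by omega⟩
  have hδ' : ∀ j, 0 ≤ δ j := fun j => (hδ j).le
  obtain ⟨w, hw, lam, hlam, hwA⟩ :=
    exists_pos_smul_le_vecMul_Bstar_sub_diagonal hB hBh hz hBhirr hδ' hp hpos
  obtain ⟨ε, hε, hgrowth⟩ := exists_pos_growth_near_equilibrium (B := B) (Bh := Bh)
    (Matrix.diagonal δ) (p := pstar) (w := w) (a := lam / 2) fun k => by
      have := hwA k
      simp only [Pi.smul_apply, smul_eq_mul] at this
      linarith [mul_pos hlam (hw k)]
  refine ⟨ε, hε, fun d hd => ?_⟩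
  obtain ⟨c, hc, hcdε1⟩ := exists_between (lt_min (lt_min hd hε) one_pos)
  obtain ⟨hcdε, hc1⟩ := lt_min_iff.1 hcdε1
  obtain ⟨x₀, hx₀, hx₀p, hx₀I⟩ := exists_inSimplex_norm_sub_le hp hc.le hc1.le
  obtain ⟨y, hy0, hy, hyΔ⟩ := exists_isSol_inSimplex hB hBh hδ' hx₀
  have hy0p : ‖y 0 - (pstar, 0)‖ < min d ε := hy0 ▸ hx₀p.trans_lt hcdε
  refine ⟨y, hy, hyΔ 0 le_rfl, hyΔ, hy0p.trans_le (min_le_left _ _), ?_⟩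
  refine exists_pos_le_norm_sub_of_growth (fun j => (hw j).le) (half_pos hlam) hgrowth hy hyΔ
    (hy0p.trans_le (min_le_right _ _)) ?_
  rw [hy0, hx₀I]
  exact Finset.sum_pos (fun j _ => mul_pos (hw j) hc) Finset.univ_nonempty

/-- instability of infection-free equilibria with Λ(p*) > 0. -/
theorem stmt6 {N : ℕ} (hN : 2 ≤ N) (B Bh : Matrix (Fin N) (Fin N) ℝ) (δ : Fin N → ℝ)
    (hB : ∀ j k, 0 ≤ B j k) (hBirr : MatIrreducible N B)
    (hBh : ∀ j k, 0 ≤ Bh j k) (hz : ∀ j k, B j k = 0 → Bh j k = 0)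
    (hBhirr : MatIrreducible N Bh)
    (hδ : ∀ j, 0 < δ j)
    (pstar : Fin N → ℝ) (hp : pstar ∈ cube N)
    (hpos : 0 < specAbsc N (Bstar N B Bh pstar - Matrix.diagonal δ)) :
    ∃ ε > (0:ℝ), ∀ d > (0:ℝ),
      ∃ y : ℝ → (Fin N → ℝ) × (Fin N → ℝ),
        IsSol N B Bh (Matrix.diagonal δ) y ∧
        inSimplex N (y 0) ∧
        (∀ t : ℝ, 0 ≤ t → inSimplex N (y t)) ∧
        ‖y 0 - (pstar, (0 : Fin N → ℝ))‖ < d ∧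
        ∃ t > (0:ℝ), ε ≤ ‖y t - (pstar, (0 : Fin N → ℝ))‖ :=
  stmt6_general hN B Bh δ hB hBh hz hBhirr hδ pstar hp hpos
end
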